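/- For all D0, D1 ≥ 1 and C > 0 there exists a constant D = D(D0, D1, C) with the following property. Let r > 0 and let M be a nonempty finite set endowed with two metrics d0 and d1 such that |d0(x,y) − d1(x,y)| ≤ 2r for all x,y ∈ M, such that (M,d0) embeds into L1 with distortion at most D0 and (M,d1) embeds into L1 with distortion at most D1, and such that d1(x,y) ≤ C·d0(x,y) for all x,y ∈ M. Then the r-twisted union (M × {0,1}, d) of (M,d0) and (M,d1) embeds into L1 with distortion at most D. -/

import Mathlib

open MeasureTheory

/-- `d` is a metric on `M`. -/
def IsMetric {M : Type*} (d : M → M → ℝ) : Prop :=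
  (∀ x, d x x = 0) ∧ (∀ x y, x ≠ y → 0 < d x y) ∧
  (∀ x y, d x y = d y x) ∧ (∀ x y z, d x z ≤ d x y + d y z)

/-- `(M, f)` embeds into (some) `L₁` with distortion at most `K`, in the
generalized sense allowing `f` to be an arbitrary nonnegative function. -/
def EmbedsL1 {M : Type*} (f : M → M → ℝ) (K : ℝ) : Prop :=
  ∃ (Ω : Type) (_ : MeasurableSpace Ω) (μ : Measure Ω) (Ψ : M → Lp ℝ 1 μ),
    ∀ x y, f x y ≤ ‖Ψ x - Ψ y‖ ∧ ‖Ψ x - Ψ y‖ ≤ K * f x y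

/-- The metric of the (generalized) twisted union of `(M, d0)` and `(M, d1)`
with joining function `r`, realized on `M × Bool` (`false` plays the role of
`0` and `true` the role of `1`). -/
noncomputable def twistedDist {M : Type*} (d0 d1 : M → M → ℝ) (r : M → ℝ) :
    M × Bool → M × Bool → ℝ
  | (x, false), (y, false) => d0 x y
  | (x, true),  (y, true)  => d1 x y
  | (x, false), (y, true)  => ⨅ z : M, d0 x z + d1 z y + r z
  | (x, true),  (y, false) => ⨅ z : M, d0 y z + d1 z x + r z


/-!
On a finite set every `L₁` metric is a nonnegative combination `∑ w_A δ_A` of cut metrics.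
Selecting each cut `A` independently with probability `1 - e^{-w_A}` and recording which selected
cuts contain a point, two points get different records with probability `1 - e^{-‖Ψ x - Ψ y‖}`;
so this function, and hence the truncation `r (1 - e^{-d/r}) ≍ min d r` of an `L₁` metric `d`,
is again an `L₁` metric.

With `Ψ₁` embedding `d1` and `T` embedding the truncation of `d0`, send `(x, 0)` to
`(Ψ₁ x, T x, 0)` and `(y, 1)` to `(Ψ₁ y, T x₀, r)`. Inside sheet `0` the truncation accounts for
`d0` at scales below `r`, and `d1 ≥ d0 - 2r` at larger scales; between the sheets the twisted
distance is `d1 + r` up to a factor `2`.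
-/

def IsFiniteL1 {X : Type*} (f : X → X → ℝ) : Prop :=
  ∃ (ι : Type) (_ : Fintype ι) (F : X → ι → ℝ), ∀ x y, f x y = ∑ i, |F x i - F y i|

namespace IsFiniteL1

variable {X Y : Type*} {f g : X → X → ℝ}

theorem zero : IsFiniteL1 (fun _ _ : X => (0 : ℝ)) :=
  ⟨Empty, inferInstance, fun _ => Empty.elim, by simp⟩

theorem add (hf : IsFiniteL1 f) (hg : IsFiniteL1 g) :
    IsFiniteL1 (fun x y => f x y + g x y) := by
  obtain ⟨ι, _, F, hF⟩ := hf
  obtain ⟨κ, _, G, hG⟩ := hg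
  exact ⟨ι ⊕ κ, inferInstance, fun x => Sum.elim (F x) (G x), fun x y => by
    simp [Fintype.sum_sum_type, hF, hG]⟩

theorem sum {B : Type*} (s : Finset B) {f : B → X → X → ℝ} (h : ∀ b ∈ s, IsFiniteL1 (f b)) :
    IsFiniteL1 (fun x y => ∑ b ∈ s, f b x y) := by
  classical
  induction s using Finset.induction_on with
  | empty => simpa using zero
  | insert b s hb ih =>
    simp only [Finset.sum_insert hb]
    exact (h b (Finset.mem_insert_self b s)).add
      (ih fun b' hb' => h b' (Finset.mem_insert_of_mem hb'))

theorem const_mul (hf : IsFiniteL1 f) {c : ℝ} (hc : 0 ≤ c) :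
    IsFiniteL1 (fun x y => c * f x y) := by
  obtain ⟨ι, _, F, hF⟩ := hf
  refine ⟨ι, inferInstance, fun x i => c * F x i, fun x y => ?_⟩
  simp [hF, Finset.mul_sum, ← mul_sub, abs_mul, abs_of_nonneg hc]

theorem comp (hf : IsFiniteL1 f) (φ : Y → X) : IsFiniteL1 (fun x y => f (φ x) (φ y)) := by
  obtain ⟨ι, _, F, hF⟩ := hf
  exact ⟨ι, inferInstance, F ∘ φ, fun x y => hF _ _⟩

theorem embedsL1 (hg : IsFiniteL1 g) {K : ℝ} (h : ∀ x y, f x y ≤ g x y ∧ g x y ≤ K * f x y) :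
    EmbedsL1 f K := by
  obtain ⟨ι, _, F, hF⟩ := hg
  let _ : MeasurableSpace ι := ⊤
  have hF_mem (x : X) : MemLp (F x) 1 Measure.count := MemLp.of_discrete
  have hnorm (x y : X) : ‖(hF_mem x).toLp _ - (hF_mem y).toLp _‖ = g x y := by
    rw [← MemLp.toLp_sub, Lp.norm_toLp, eLpNorm_one_eq_lintegral_enorm, lintegral_count,
      tsum_fintype, ENNReal.toReal_sum fun _ _ => enorm_ne_top, hF]
    simp [Real.norm_eq_abs]
  exact ⟨ι, ⊤, Measure.count, fun x => (hF_mem x).toLp _, fun x y => hnorm x y ▸ h x y⟩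

end IsFiniteL1

theorem isFiniteL1_ite_eq {X : Type*} {α : Type} [Fintype α] [DecidableEq α] (φ : X → α) :
    IsFiniteL1 (fun x y => if φ x = φ y then (0 : ℝ) else 1) := by
  refine ⟨α, inferInstance, fun x i => if i = φ x then 1 / 2 else 0, fun x y => ?_⟩
  by_cases h : φ x = φ y
  · simp [h]
  · have hterm (i : α) : |(if i = φ x then (1 / 2 : ℝ) else 0) - if i = φ y then 1 / 2 else 0|
        = (if i = φ x then 1 / 2 else 0) + if i = φ y then 1 / 2 else 0 := by
      by_cases hx : i = φ x <;> by_cases hy : i = φ y <;> simp_all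
    simp only [hterm, Finset.sum_add_distrib, Finset.sum_ite_eq', Finset.mem_univ, if_true, h]
    norm_num

section Cuts

variable {M : Type*} [Fintype M] [DecidableEq M]

def separatingCuts (x y : M) : Finset (Finset M) := {A | ¬(x ∈ A ↔ y ∈ A)}

theorem isFiniteL1_sum_separatingCuts {w : Finset M → ℝ} (hw : ∀ A, 0 ≤ w A) :
    IsFiniteL1 (fun x y => ∑ A ∈ separatingCuts x y, w A) := by
  have h (x y : M) : ∑ A ∈ separatingCuts x y, w A
      = ∑ A, w A * if decide (x ∈ A) = decide (y ∈ A) then 0 else 1 := by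
    simp [separatingCuts, Finset.sum_filter]
  simp only [h]
  exact IsFiniteL1.sum _ fun A _ => (isFiniteL1_ite_eq _).const_mul (hw A)

noncomputable def level (a : M → ℝ) (t : ℝ) : Finset M := {z | t < a z}

theorem measurableSet_level_eq {β : Type*} [MeasurableSpace β] {a : β → M → ℝ} {t : β → ℝ}
    (ha : ∀ z, Measurable (a · z)) (ht : Measurable t) (A : Finset M) :
    MeasurableSet {p | level (a p) (t p) = A} := by
  simp only [level, Finset.ext_iff, Finset.mem_filter, Finset.mem_univ, true_and,
    Set.ofPred_forall]
  refine MeasurableSet.iInter fun z => ?_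
  by_cases hz : z ∈ A
  · simpa [hz] using measurableSet_lt ht (ha z)
  · simpa [hz] using measurableSet_le (ha z) ht

-- Layer cake: the thresholds `t` whose cut `level a t` separates `x` and `y` fill an interval
-- of length `|a x - a y|`.
theorem ofReal_abs_sub_eq_sum_volume_level (a : M → ℝ) (x y : M) :
    ENNReal.ofReal |a x - a y| = ∑ A ∈ separatingCuts x y, volume (level a ⁻¹' {A}) := by
  rw [sum_measure_preimage_singleton (f := level a) _ fun A _ =>
    measurableSet_level_eq (a := fun _ => a) (fun _ => measurable_const) measurable_id A]
  have hsep :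
      level a ⁻¹' ↑(separatingCuts x y) = Set.Ico (min (a x) (a y)) (max (a x) (a y)) := by
    ext t
    simp only [separatingCuts, level, Set.mem_preimage, Finset.coe_filter, Finset.mem_univ,
      true_and, Set.mem_ofPred_eq, Finset.mem_filter, Set.mem_Ico, min_le_iff, lt_max_iff]
    simp only [← not_lt]
    tauto
  rw [hsep, Real.volume_Ico, max_sub_min_eq_abs']

theorem exists_cut_decomposition {Ω : Type*} [MeasurableSpace Ω] {μ : Measure Ω}
    (Ψ : M → Lp ℝ 1 μ) :
    ∃ w : Finset M → ℝ, (∀ A, 0 ≤ w A) ∧ ∀ x y, ‖Ψ x - Ψ y‖ = ∑ A ∈ separatingCuts x y, w A := by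
  set W : Finset M → ENNReal := fun A => ∫⁻ ω, volume (level (fun z => Ψ z ω) ⁻¹' {A}) ∂μ
  have hmeas (A : Finset M) :
      Measurable fun ω => volume (level (fun z => Ψ z ω) ⁻¹' {A}) :=
    measurable_measure_prodMk_left (measurableSet_level_eq
      (fun z => (Lp.stronglyMeasurable (Ψ z)).measurable.comp measurable_fst) measurable_snd A)
  have hW (x y : M) : eLpNorm (Ψ x - Ψ y) 1 μ = ∑ A ∈ separatingCuts x y, W A := by
    rw [eLpNorm_one_eq_lintegral_enorm, ← lintegral_finsetSum _ fun A _ => hmeas A]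
    refine lintegral_congr_ae ?_
    filter_upwards [Lp.coeFn_sub (Ψ x) (Ψ y)] with ω hω
    rw [hω, Pi.sub_apply, Real.enorm_eq_ofReal_abs]
    exact ofReal_abs_sub_eq_sum_volume_level (fun z => Ψ z ω) x y
  refine ⟨fun A => (W A).toReal, fun A => ENNReal.toReal_nonneg, fun x y => ?_⟩
  have hfin : ∑ A ∈ separatingCuts x y, W A ≠ ⊤ := hW x y ▸ (Lp.eLpNorm_lt_top _).ne
  rw [Lp.norm_def, hW, ENNReal.toReal_sum (ENNReal.sum_ne_top.1 hfin)]

end Cuts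

section Bernoulli

variable {K : Type*} [Fintype K] [DecidableEq K] (q : K → ℝ)

def bernoulliWeight (b : Finset K) : ℝ := (∏ A ∈ b, q A) * ∏ A ∈ bᶜ, (1 - q A)

theorem bernoulliWeight_nonneg (h0 : ∀ A, 0 ≤ q A) (h1 : ∀ A, q A ≤ 1)
    (b : Finset K) : 0 ≤ bernoulliWeight q b :=
  mul_nonneg (Finset.prod_nonneg fun A _ => h0 A)
    (Finset.prod_nonneg fun A _ => sub_nonneg.2 (h1 A))

theorem sum_bernoulliWeight_disjoint (S : Finset K) :
    ∑ b, (if Disjoint b S then bernoulliWeight q b else 0) = ∏ A ∈ S, (1 - q A) := by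
  have h := Finset.prod_add (fun A => if A ∉ S then q A else 0) (fun A => 1 - q A) Finset.univ
  simp only [Finset.powerset_univ, ← Finset.compl_eq_univ_sdiff, Finset.prod_ite_zero] at h
  have hfactor (A : K) :
      (if A ∉ S then q A else 0) + (1 - q A) = if A ∈ S then 1 - q A else 1 := by
    split_ifs <;> simp_all
  simp only [hfactor, Finset.prod_ite_mem, Finset.univ_inter] at h
  rw [h]
  refine Finset.sum_congr rfl fun b _ => ?_
  simp [bernoulliWeight, Finset.disjoint_left, ite_mul]

theorem sum_bernoulliWeight : ∑ b, bernoulliWeight q b = 1 := by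
  simpa using sum_bernoulliWeight_disjoint q ∅

end Bernoulli

theorem min_le_two_mul_one_sub_exp_neg {u : ℝ} (hu : 0 ≤ u) :
    min u 1 ≤ 2 * (1 - Real.exp (-u)) := by
  have he := Real.exp_neg_one_lt_half
  rcases le_total u 1 with h | h
  · have hconv := convexOn_exp.2 (Set.mem_univ (-1)) (Set.mem_univ 0) hu (sub_nonneg.2 h)
      (add_sub_cancel u 1)
    simp only [smul_eq_mul, mul_neg_one, mul_zero, add_zero, Real.exp_zero, mul_one] at hconv
    rw [min_eq_left h]
    nlinarith
  · have : Real.exp (-u) ≤ Real.exp (-1) := Real.exp_le_exp.2 (neg_le_neg h)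
    rw [min_eq_right h]
    linarith

noncomputable def expTruncation (r s : ℝ) : ℝ := r * (1 - Real.exp (-(s / r)))

theorem expTruncation_le_min {r : ℝ} (hr : 0 < r) (s : ℝ) : expTruncation r s ≤ min s r := by
  have h : 1 - Real.exp (-(s / r)) ≤ min (s / r) 1 :=
    le_min (by linarith [Real.one_sub_le_exp_neg (s / r)]) (sub_le_self _ (Real.exp_pos _).le)
  calc expTruncation r s ≤ r * min (s / r) 1 := mul_le_mul_of_nonneg_left h hr.le
    _ = min s r := by rw [mul_min_of_nonneg _ _ hr.le, mul_div_cancel₀ _ hr.ne', mul_one]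

theorem min_le_two_mul_expTruncation {r s : ℝ} (hr : 0 < r) (hs : 0 ≤ s) :
    min s r ≤ 2 * expTruncation r s := by
  calc min s r = r * min (s / r) 1 := by
        rw [mul_min_of_nonneg _ _ hr.le, mul_div_cancel₀ _ hr.ne', mul_one]
    _ ≤ r * (2 * (1 - Real.exp (-(s / r)))) :=
        mul_le_mul_of_nonneg_left (min_le_two_mul_one_sub_exp_neg (div_nonneg hs hr.le)) hr.le
    _ = 2 * expTruncation r s := by rw [expTruncation]; ring

section Truncation

variable {M : Type} [Fintype M]

theorem isFiniteL1_one_sub_prod_separatingCuts [DecidableEq M] {q : Finset M → ℝ}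
    (h0 : ∀ A, 0 ≤ q A) (h1 : ∀ A, q A ≤ 1) :
    IsFiniteL1 (fun x y => 1 - ∏ A ∈ separatingCuts x y, (1 - q A)) := by
  have hpattern (b : Finset (Finset M)) (x y : M) :
      b.filter (x ∈ ·) = b.filter (y ∈ ·) ↔ Disjoint b (separatingCuts x y) := by
    simp [Finset.ext_iff, Finset.disjoint_left, separatingCuts]
  have h (x y : M) : 1 - ∏ A ∈ separatingCuts x y, (1 - q A)
      = ∑ b, bernoulliWeight q b * if b.filter (x ∈ ·) = b.filter (y ∈ ·) then 0 else 1 := by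
    rw [← sum_bernoulliWeight_disjoint]
    conv_lhs => rw [← sum_bernoulliWeight q, ← Finset.sum_sub_distrib]
    refine Finset.sum_congr rfl fun b _ => ?_
    simp only [hpattern]
    split_ifs <;> ring
  simp only [h]
  exact IsFiniteL1.sum _ fun b _ =>
    (isFiniteL1_ite_eq _).const_mul (bernoulliWeight_nonneg q h0 h1 b)

variable {Ω : Type*} [MeasurableSpace Ω] {μ : Measure Ω}

theorem isFiniteL1_norm_sub (Ψ : M → Lp ℝ 1 μ) : IsFiniteL1 (fun x y => ‖Ψ x - Ψ y‖) := by
  classical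
  obtain ⟨w, hw, hΨ⟩ := exists_cut_decomposition Ψ
  simpa only [hΨ] using isFiniteL1_sum_separatingCuts hw

theorem isFiniteL1_one_sub_exp_neg_norm_sub (Ψ : M → Lp ℝ 1 μ) :
    IsFiniteL1 (fun x y => 1 - Real.exp (-‖Ψ x - Ψ y‖)) := by
  classical
  obtain ⟨w, hw, hΨ⟩ := exists_cut_decomposition Ψ
  have h (x y : M) : 1 - Real.exp (-‖Ψ x - Ψ y‖)
      = 1 - ∏ A ∈ separatingCuts x y, (1 - (1 - Real.exp (-w A))) := by
    simp [hΨ, ← Real.exp_sum, Finset.sum_neg_distrib]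
  simp only [h]
  exact isFiniteL1_one_sub_prod_separatingCuts
    (fun A => sub_nonneg.2 (Real.exp_le_one_iff.2 (neg_nonpos.2 (hw A))))
    (fun A => sub_le_self _ (Real.exp_pos _).le)

theorem isFiniteL1_expTruncation_norm_sub {r : ℝ} (hr : 0 ≤ r) (Ψ : M → Lp ℝ 1 μ) :
    IsFiniteL1 (fun x y => expTruncation r ‖Ψ x - Ψ y‖) := by
  have h (x y : M) : ‖r⁻¹ • Ψ x - r⁻¹ • Ψ y‖ = ‖Ψ x - Ψ y‖ / r := by
    rw [← smul_sub, norm_smul, Real.norm_of_nonneg (inv_nonneg.2 hr), inv_mul_eq_div]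
  have := (isFiniteL1_one_sub_exp_neg_norm_sub fun x => r⁻¹ • Ψ x).const_mul hr
  simp only [h] at this
  exact this

end Truncation

theorem IsMetric.nonneg {M : Type*} {d : M → M → ℝ} (hd : IsMetric d) (x y : M) : 0 ≤ d x y := by
  rcases eq_or_ne x y with rfl | h
  · exact (hd.1 x).ge
  · exact (hd.2.1 x y h).le

section TwistedUnion

variable {M : Type*}

def twistedModel (δ τ : M → M → ℝ) (x₀ : M) (r : ℝ) (p q : M × Bool) : ℝ :=
  δ p.1 q.1 + τ (cond p.2 x₀ p.1) (cond q.2 x₀ q.1) + if p.2 = q.2 then 0 else r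

theorem IsFiniteL1.twistedModel {δ τ : M → M → ℝ} (hδ : IsFiniteL1 δ) (hτ : IsFiniteL1 τ)
    (x₀ : M) {r : ℝ} (hr : 0 ≤ r) : IsFiniteL1 (twistedModel δ τ x₀ r) := by
  have h := ((hδ.comp Prod.fst).add (hτ.comp fun p : M × Bool => cond p.2 x₀ p.1)).add
    ((isFiniteL1_ite_eq (Prod.snd : M × Bool → Bool)).const_mul hr)
  simp only [mul_ite, mul_zero, mul_one] at h
  exact h

variable [Finite M] {d0 d1 : M → M → ℝ} {r : ℝ}

theorem twistedDist_cross_bounds (hd0 : IsMetric d0) (hd1 : IsMetric d1)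
    (hnear : ∀ x y, |d0 x y - d1 x y| ≤ 2 * r) (x y : M) :
    r ≤ ⨅ z, d0 x z + d1 z y + r ∧ d1 x y ≤ (⨅ z, d0 x z + d1 z y + r) + r ∧
      ⨅ z, d0 x z + d1 z y + r ≤ d1 x y + r := by
  have : Nonempty M := ⟨x⟩
  refine ⟨le_ciInf fun z => ?_, ?_, ?_⟩
  · linarith [hd0.nonneg x z, hd1.nonneg z y]
  · rw [← sub_le_iff_le_add]
    refine le_ciInf fun z => ?_
    linarith [hd1.2.2.2 x z y, (abs_le.1 (hnear x z)).1]
  · have hbdd := (Set.finite_range fun z => d0 x z + d1 z y + r).bddBelow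
    simpa [hd0.1 x] using ciInf_le hbdd x

theorem twistedModel_bounds (hd0 : IsMetric d0) (hd1 : IsMetric d1)
    (hnear : ∀ x y, |d0 x y - d1 x y| ≤ 2 * r) (hr : 0 ≤ r) {C D0 D1 : ℝ} (hC : 0 ≤ C)
    (hD0 : 0 ≤ D0) (hD1 : 0 ≤ D1) (hd1_le : ∀ x y, d1 x y ≤ C * d0 x y) {δ τ : M → M → ℝ}
    (hδ : ∀ x y, d1 x y ≤ δ x y ∧ δ x y ≤ D1 * d1 x y)
    (hτ : ∀ x y, min (d0 x y) r ≤ 2 * τ x y ∧ τ x y ≤ min (D0 * d0 x y) r)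
    (x₀ : M) (p q : M × Bool) :
    twistedDist d0 d1 (fun _ => r) p q ≤ 4 * twistedModel δ τ x₀ r p q ∧
      twistedModel δ τ x₀ r p q
        ≤ (C * D1 + D0 + 2 * D1 + 2) * twistedDist d0 d1 (fun _ => r) p q := by
  have hCD : 0 ≤ C * D1 := mul_nonneg hC hD1
  have hτ_nonneg (x y : M) : 0 ≤ τ x y := by
    linarith [(hτ x y).1, le_min (hd0.nonneg x y) hr]
  have hτ_le (x y : M) : τ x y ≤ r := (hτ x y).2.trans (min_le_right _ _)
  have hcross (x y : M) {δ' τ' : ℝ} (hδ' : d1 x y ≤ δ' ∧ δ' ≤ D1 * d1 x y)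
      (hτ' : 0 ≤ τ' ∧ τ' ≤ r) :
      (⨅ z, d0 x z + d1 z y + r) ≤ 4 * (δ' + τ' + r) ∧
        δ' + τ' + r ≤ (C * D1 + D0 + 2 * D1 + 2) * ⨅ z, d0 x z + d1 z y + r := by
    obtain ⟨hrT, hd1T, hTd1⟩ := twistedDist_cross_bounds hd0 hd1 hnear x y
    have := mul_le_mul_of_nonneg_left hd1T hD1
    constructor <;> nlinarith [hd1.nonneg x y]
  rcases p with ⟨x, _ | _⟩ <;> rcases q with ⟨y, _ | _⟩
  · obtain ⟨hδl, hδu⟩ := hδ x y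
    obtain ⟨hτl, hτu⟩ := hτ x y
    have hd0d1 := (abs_le.1 (hnear x y)).2
    have := mul_le_mul_of_nonneg_left (hd1_le x y) hD1
    simp only [twistedDist, twistedModel, cond_false, if_true, add_zero]
    constructor
    · rcases le_total (d0 x y) r with h | h
      · rw [min_eq_left h] at hτl
        linarith [hd1.nonneg x y, hτ_nonneg x y]
      · rw [min_eq_right h] at hτl
        linarith [hd1.nonneg x y]
    · nlinarith [hd0.nonneg x y, min_le_left (D0 * d0 x y) r]
  · exact hcross x y (hδ x y) ⟨hτ_nonneg x x₀, hτ_le x x₀⟩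
  · have hδ' := hδ x y
    rw [hd1.2.2.1 x y] at hδ'
    exact hcross y x hδ' ⟨hτ_nonneg x₀ y, hτ_le x₀ y⟩
  · obtain ⟨hδl, hδu⟩ := hδ x y
    have hτ₀ : τ x₀ x₀ ≤ 0 := by simpa [hd0.1 x₀, hr] using (hτ x₀ x₀).2
    simp only [twistedDist, twistedModel, cond_true, if_true, add_zero]
    constructor <;> nlinarith [hd1.nonneg x y, hτ_nonneg x₀ x₀]

end TwistedUnion

/-- Corollary 5.3: the `r`-twisted union of two `L₁`-embeddable metrics with
`d1 ≤ C·d0` embeds into `L₁` with distortion depending only on `D0, D1, C`. -/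
theorem twisted_union_embeds_L1_of_d1_le_Cd0
    (D0 D1 : ℝ) (hD0 : 1 ≤ D0) (hD1 : 1 ≤ D1) (C : ℝ) (hC : 0 < C) :
    ∃ D : ℝ,
      ∀ (M : Type) [Fintype M] [Nonempty M]
        (d0 d1 : M → M → ℝ) (r : ℝ), 0 < r →
        IsMetric d0 → IsMetric d1 →
        (∀ x y, |d0 x y - d1 x y| ≤ 2 * r) →
        EmbedsL1 d0 D0 → EmbedsL1 d1 D1 →
        (∀ x y, d1 x y ≤ C * d0 x y) →
        EmbedsL1 (twistedDist d0 d1 (fun _ => r)) D := by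
  refine ⟨4 * (C * D1 + D0 + 2 * D1 + 2), ?_⟩
  intro M _ _ d0 d1 r hr hd0 hd1 hnear ⟨_, _, μ0, Ψ0, hΨ0⟩ ⟨_, _, μ1, Ψ1, hΨ1⟩ hd1_le
  obtain ⟨x₀⟩ := ‹Nonempty M›
  have hτ (x y : M) : min (d0 x y) r ≤ 2 * expTruncation r ‖Ψ0 x - Ψ0 y‖ ∧
      expTruncation r ‖Ψ0 x - Ψ0 y‖ ≤ min (D0 * d0 x y) r :=
    ⟨(min_le_min_right r (hΨ0 x y).1).trans (min_le_two_mul_expTruncation hr (norm_nonneg _)),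
      (expTruncation_le_min hr _).trans (min_le_min_right r (hΨ0 x y).2)⟩
  have hmodel := ((isFiniteL1_norm_sub Ψ1).twistedModel
    (isFiniteL1_expTruncation_norm_sub hr.le Ψ0) x₀ hr.le).const_mul zero_le_four
  refine hmodel.embedsL1 fun p q => ?_
  obtain ⟨hlow, hup⟩ := twistedModel_bounds hd0 hd1 hnear hr.le hC.le (by linarith)
    (by linarith) hd1_le hΨ1 hτ x₀ p q
  exact ⟨hlow, mul_assoc (4 : ℝ) _ _ ▸ mul_le_mul_of_nonneg_left hup zero_le_four⟩
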